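/- Let m ≥ 3 be odd, let λ = e^{2πi/m} (a primitive m-th root of unity), and let i be a positive integer with gcd(i, m) = 1. Let A = ℂ⟨u,v⟩/(u² − λ^i·v²). Let τ : A → A be the ℂ-algebra endomorphism determined by τ(u) = −u, τ(v) = −v. Let S₊, S₋ : A → A be any ℂ-linear maps satisfying, for all nonnegative integers p and all integers q ≥ 1: S₊(u^{2p}·(vu)^q) = λ^{−iq}·u^{2p+1}·(vu)^{q−1}·v, S₊(u^{2p+1}·(vu)^{q−1}·v) = λ^{iq}·u^{2p}·(vu)^q, S₊(u^{2p}) = u^{2p}, and S₋(u^{2p}·(vu)^q) = λ^{iq}·u^{2p+1}·(vu)^{q−1}·v, S₋(u^{2p+1}·(vu)^{q−1}·v) = λ^{−iq}·u^{2p}·(vu)^q, S₋(u^{2p}) = u^{2p}. Then the set { F ∈ A : τ(F) = F, S₊(F) = F, S₋(F) = F } equals the ℂ-subalgebra of A generated by u² and (uv)^m + (vu)^m. -/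

import Mathlib

/-! Theorem 5.7 of Ferraro–Kirkman–Moore–Won: the fixed ring of the inner-faithful
action of Masuoka's Hopf algebra `𝓐_{4m}`, `m` odd, on `A⁻ = ℂ⟨u,v⟩/(u² - λ^i v²)`
is `ℂ[u², (uv)^m + (vu)^m]`. -/

noncomputable section

open FreeAlgebra

/-- The relation `u² = C • v²` on `ℂ⟨u,v⟩`, i.e. the quotient by the two-sided
ideal generated by `u² - C·v²`. -/
inductive Stmt17.Rel (C : ℂ) : FreeAlgebra ℂ (Fin 2) → FreeAlgebra ℂ (Fin 2) → Prop
  | main : Stmt17.Rel C (ι ℂ 0 * ι ℂ 0) (C • (ι ℂ 1 * ι ℂ 1))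

/-- `A = ℂ⟨u,v⟩/(u² - C·v²)`. -/
abbrev Stmt17.A (C : ℂ) := RingQuot (Stmt17.Rel C)

def Stmt17.u (C : ℂ) : Stmt17.A C := RingQuot.mkAlgHom ℂ (Stmt17.Rel C) (ι ℂ 0)
def Stmt17.v (C : ℂ) : Stmt17.A C := RingQuot.mkAlgHom ℂ (Stmt17.Rel C) (ι ℂ 1)

/-!
In `A` the element `u²` is central, and `uv`, `vu` commute with `(uv)(vu) = C⁻¹ u⁴`; hence `A`
is spanned by the words `u^a (vu)^q v^ε` with `ε ∈ {0, 1}`, on which `τ` acts by `±1`. The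
`τ`-invariants are therefore spanned by `u^{2p}(vu)^q` and `u^{2p}(uv)^q`, which `S₊` and `S₋`
exchange with the weights `ζ^{∓q}`, `ζ = λ^i`. So `S₊S₋` acts diagonally with eigenvalues
`ζ^{±2q}`, and averaging over its powers kills every word with `m ∤ q`, since `ζ` is a primitive
`m`-th root of unity with `m` odd; averaging with `S₊` then leaves the span of
`u^{2p}((uv)^{mk} + (vu)^{mk})`. Only spanning sets are needed, never linear independence: a
fixed vector is its own image under these averaging operators. Finally that span is the
subalgebra generated by `u²` and `(uv)^m + (vu)^m`, because `X^k + Y^k` lies in any subring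
containing `X + Y` and `XY` when `X` and `Y` commute.
-/

section FixedVectors

open Submodule

variable {K M ι : Type*} [Field K] [AddCommGroup M] [Module K M] {g : ι → M} {x : M}

theorem mem_span_image_of_apply_eq_self {R : Module.End K M} {c : ι → K} {n : ℕ}
    (hn : (n : K) ≠ 0) (hc : ∀ j, c j ^ n = 1) (hR : ∀ j, R (g j) = c j • g j)
    (hx : x ∈ span K (Set.range g)) (hRx : R x = x) :
    x ∈ span K (g '' {j | c j = 1}) := by
  set P : Module.End K M := (n : K)⁻¹ • ∑ k ∈ Finset.range n, R ^ k
  have hPx : P x = x := by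
    have hpow : ∀ k : ℕ, (R ^ k) x = x := fun k => by
      rw [Module.End.pow_apply]; exact Function.iterate_fixed hRx k
    simp only [P, LinearMap.smul_apply, LinearMap.sum_apply, hpow,
      Finset.sum_const, Finset.card_range, ← Nat.cast_smul_eq_nsmul K, smul_smul,
      inv_mul_cancel₀ hn, one_smul]
  have hPg : ∀ j, P (g j) ∈ span K (g '' {j | c j = 1}) := fun j => by
    have hpow : ∀ k : ℕ, (R ^ k) (g j) = c j ^ k • g j := fun k => by
      induction k with
      | zero => simp
      | succ k ih => rw [pow_succ', Module.End.mul_apply, ih, map_smul, hR, smul_smul, pow_succ]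
    simp only [P, LinearMap.smul_apply, LinearMap.sum_apply, hpow,
      ← Finset.sum_smul, smul_smul]
    by_cases hj : c j = 1
    · exact smul_mem _ _ (subset_span ⟨j, hj, rfl⟩)
    · rw [geom_sum_eq hj, hc, sub_self, zero_div, mul_zero, zero_smul]
      exact zero_mem _
  rw [← hPx]
  exact (map_span_le P _ _).mpr (by rintro _ ⟨j, rfl⟩; exact hPg j) ⟨x, hx, rfl⟩

theorem mem_span_image_add_of_apply_eq_self {T : Module.End K M} {π : ι → ι} {s : Set ι}
    (h2 : (2 : K) ≠ 0) (hT : ∀ j ∈ s, T (g j) = g (π j))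
    (hx : x ∈ span K (g '' s)) (hTx : T x = x) :
    x ∈ span K ((fun j => g j + g (π j)) '' s) := by
  have h : (1 + T) x ∈ span K ((fun j => g j + g (π j)) '' s) := by
    refine (map_span_le (1 + T) _ _).mpr ?_ ⟨x, hx, rfl⟩
    rintro _ ⟨j, hj, rfl⟩
    exact subset_span ⟨j, hj, by simp [hT j hj]⟩
  rw [LinearMap.add_apply, hTx, Module.End.one_apply, ← two_smul K] at h
  simpa [smul_smul, inv_mul_cancel₀ h2] using smul_mem _ (2 : K)⁻¹ h

theorem apply_eq_self_of_mem_span_image_add {S : Module.End K M} {π : ι → ι} {w : ι → K}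
    (hπ : Function.Involutive π) (hwπ : ∀ j, w (π j) = (w j)⁻¹)
    (hS : ∀ j, S (g j) = w j • g (π j))
    (hx : x ∈ span K ((fun j => g j + g (π j)) '' {j | w j = 1})) : S x = x := by
  suffices span K ((fun j => g j + g (π j)) '' {j | w j = 1}) ≤ LinearMap.eqLocus S 1 from
    this hx
  rw [span_le]
  rintro _ ⟨j, hj : w j = 1, rfl⟩
  simp [hS, hwπ, hj, hπ j, add_comm]

theorem mem_span_image_add_of_twisted_swap [CharZero K] {Sp Sm : Module.End K M} {π : ι → ι}
    {w : ι → K} {m : ℕ} (hm : Odd m) (hπ : Function.Involutive π) (hw : ∀ j, w j ^ m = 1)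
    (hwπ : ∀ j, w (π j) = (w j)⁻¹)
    (hSp : ∀ j, Sp (g j) = w j • g (π j)) (hSm : ∀ j, Sm (g j) = (w j)⁻¹ • g (π j))
    (hx : x ∈ span K (Set.range g)) (hpx : Sp x = x) (hmx : Sm x = x) :
    x ∈ span K ((fun j => g j + g (π j)) '' {j | w j = 1}) := by
  have hR : ∀ j, (Sp * Sm) (g j) = ((w j)⁻¹ ^ 2) • g j := fun j => by
    rw [Module.End.mul_apply, hSm, map_smul, hSp, hwπ, hπ j, smul_smul, sq]
  have hc : ∀ j, ((w j)⁻¹ ^ 2) ^ m = 1 := fun j => by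
    rw [← pow_mul, mul_comm, pow_mul, inv_pow, hw, inv_one, one_pow]
  have hx' := mem_span_image_of_apply_eq_self (by exact_mod_cast hm.pos.ne') hc hR hx
    (by rw [Module.End.mul_apply, hmx, hpx])
  have hroot : ∀ j, (w j)⁻¹ ^ 2 = 1 ↔ w j = 1 := fun j => by
    refine ⟨fun h => ?_, fun h => by simp [h]⟩
    rw [inv_pow, inv_eq_one] at h
    simpa [(Nat.coprime_two_left.mpr hm).gcd_eq_one] using pow_gcd_eq_one.mpr ⟨h, hw j⟩
  simp only [hroot] at hx'
  refine mem_span_image_add_of_apply_eq_self two_ne_zero (fun j hj => ?_) hx' hpx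
  rw [hSp, show w j = 1 from hj, one_smul]

end FixedVectors

theorem Algebra.adjoin_le_span_of_mul_mem {R A : Type*} [CommSemiring R] [Semiring A]
    [Algebra R A] {s T : Set A} (h1 : 1 ∈ Submodule.span R T)
    (hmul : ∀ t ∈ T, ∀ a ∈ s, t * a ∈ Submodule.span R T) :
    Subalgebra.toSubmodule (Algebra.adjoin R s) ≤ Submodule.span R T := by
  have hspan : ∀ a ∈ s, ∀ y ∈ Submodule.span R T, y * a ∈ Submodule.span R T := by
    intro a ha y hy
    induction hy using Submodule.span_induction with
    | mem t ht => exact hmul t ht a ha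
    | zero => simp
    | add y z _ _ hy hz => rw [add_mul]; exact add_mem hy hz
    | smul r y _ hy => rw [smul_mul_assoc]; exact Submodule.smul_mem _ r hy
  intro x hx
  suffices ∀ y ∈ Submodule.span R T, y * x ∈ Submodule.span R T by simpa using this 1 h1
  induction hx using Algebra.adjoin_induction with
  | mem a ha => exact hspan a ha
  | algebraMap r =>
    intro y hy
    rw [← Algebra.commutes, ← Algebra.smul_def]
    exact Submodule.smul_mem _ r hy
  | add a b _ _ ha hb =>
    intro y hy
    rw [mul_add]
    exact add_mem (ha y hy) (hb y hy)
  | mul a b _ _ ha hb =>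
    intro y hy
    rw [← mul_assoc]
    exact hb _ (ha y hy)

theorem Commute.pow_add_pow_mul_add {R : Type*} [Semiring R] {X Y : R} (h : Commute X Y)
    (n : ℕ) :
    (X ^ (n + 1) + Y ^ (n + 1)) * (X + Y) =
      X ^ (n + 2) + Y ^ (n + 2) + X * Y * (X ^ n + Y ^ n) := by
  have hXY : Y ^ (n + 1) * X = X * Y * Y ^ n := by
    rw [pow_succ', mul_assoc, ((h.symm.pow_left n).eq), ← mul_assoc, h.eq]
  have hYX : X ^ (n + 1) * Y = X * Y * X ^ n := by
    rw [pow_succ', mul_assoc, ((h.pow_left n).eq), ← mul_assoc]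
  rw [add_mul, mul_add, mul_add, hXY, hYX, ← pow_succ, ← pow_succ, mul_add]
  abel

theorem Commute.pow_add_pow_mem {R S : Type*} [Ring R] [SetLike S R] [SubringClass S R]
    {s : S} {X Y : R} (h : Commute X Y) (hadd : X + Y ∈ s) (hmul : X * Y ∈ s) :
    ∀ n, X ^ n + Y ^ n ∈ s
  | 0 => by rw [pow_zero, pow_zero]; exact add_mem (one_mem s) (one_mem s)
  | 1 => by simp [hadd]
  | n + 2 => by
      rw [← add_sub_cancel_right (X ^ (n + 2) + Y ^ (n + 2)) (X * Y * (X ^ n + Y ^ n)),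
        ← h.pow_add_pow_mul_add]
      exact sub_mem (mul_mem (h.pow_add_pow_mem hadd hmul (n + 1)) hadd)
        (mul_mem hmul (h.pow_add_pow_mem hadd hmul n))

namespace Stmt17

variable {C : ℂ}

theorem u_mul_u : u C * u C = C • (v C * v C) := by
  simpa [u, v] using RingQuot.mkAlgHom_rel ℂ (Rel.main (C := C))

theorem v_mul_v (hC : C ≠ 0) : v C * v C = C⁻¹ • u C ^ 2 := by
  rw [sq, u_mul_u, smul_smul, inv_mul_cancel₀ hC, one_smul]

theorem adjoin_u_v : Algebra.adjoin ℂ {u C, v C} = ⊤ := by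
  have h : ({u C, v C} : Set (A C)) = RingQuot.mkAlgHom ℂ (Rel C) '' Set.range (ι ℂ) := by
    rw [← Set.range_comp]
    ext
    simp [Fin.exists_fin_two, u, v, eq_comm]
  rw [h, Algebra.adjoin_image, FreeAlgebra.adjoin_range_ι, Algebra.map_top,
    AlgHom.range_eq_top]
  exact RingQuot.mkAlgHom_surjective ℂ (Rel C)

theorem commute_u_sq (t : A C) : Commute (u C ^ 2) t := by
  refine Algebra.commute_of_mem_adjoin_of_forall_mem_commute
    (adjoin_u_v (C := C) ▸ Algebra.mem_top) ?_
  rintro _ (rfl | rfl)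
  · exact Commute.self_pow _ _ |>.symm
  · rw [sq, u_mul_u]
    exact ((Commute.refl _).mul_left (Commute.refl _)).smul_left C

theorem u_pow_succ_mul_vu_pow_mul_v (n q : ℕ) :
    u C ^ (n + 1) * (v C * u C) ^ q * v C = u C ^ n * (u C * v C) ^ (q + 1) := by
  rw [pow_succ, mul_assoc, mul_assoc, ← mul_assoc (u C), ← mul_pow_mul, pow_succ, mul_assoc]

theorem uv_mul_vu (hC : C ≠ 0) : u C * v C * (v C * u C) = C⁻¹ • (u C ^ 2) ^ 2 := by
  rw [mul_assoc, ← mul_assoc (v C), v_mul_v hC, smul_mul_assoc, mul_smul_comm, ← mul_assoc,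
    ← pow_succ', ← pow_succ, ← pow_mul]

theorem vu_mul_uv (hC : C ≠ 0) : v C * u C * (u C * v C) = C⁻¹ • (u C ^ 2) ^ 2 := by
  rw [mul_assoc, ← mul_assoc (u C), ← sq, ← mul_assoc, ← (commute_u_sq (v C)).eq, mul_assoc,
    v_mul_v hC, mul_smul_comm, sq (u C ^ 2)]

theorem commute_uv_vu (hC : C ≠ 0) : Commute (u C * v C) (v C * u C) :=
  (uv_mul_vu hC).trans (vu_mul_uv hC).symm

def word (C : ℂ) : ℕ × ℕ × Bool → A C
  | (a, q, b) => u C ^ a * (v C * u C) ^ q * v C ^ b.toNat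

theorem span_word (hC : C ≠ 0) : Submodule.span ℂ (Set.range (word C)) = ⊤ := by
  have mem : ∀ j, word C j ∈ Submodule.span ℂ (Set.range (word C)) :=
    fun j => Submodule.subset_span ⟨j, rfl⟩
  refine eq_top_iff.mpr (le_trans ?_ (Algebra.adjoin_le_span_of_mul_mem (s := {u C, v C})
    (by simpa [word] using mem (0, 0, false)) ?_))
  · rw [adjoin_u_v, Algebra.top_toSubmodule]
  rintro _ ⟨⟨a, q, b⟩, rfl⟩ x (rfl | rfl)
  · rcases b with _ | _
    · rcases q with _ | q
      · simpa [word, pow_succ] using mem (a + 1, 0, false)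
      · convert mem (a + 2, q, true) using 1
        simp only [word, Bool.toNat_false, Bool.toNat_true, pow_zero, pow_one, mul_one]
        have hvuu : v C * u C * u C = u C ^ 2 * v C := by
          rw [mul_assoc, ← sq]; exact (commute_u_sq _).eq.symm
        rw [pow_succ, mul_assoc, mul_assoc, hvuu, ← mul_assoc _ (u C ^ 2),
          ← (commute_u_sq _).eq, pow_add]
        simp only [mul_assoc]
    · convert mem (a, q + 1, false) using 1
      simp only [word, Bool.toNat_false, Bool.toNat_true, pow_zero, one_mul, mul_one, pow_succ,
        mul_assoc]
  · rcases b with _ | _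
    · simpa [word] using mem (a, q, true)
    · convert Submodule.smul_mem _ C⁻¹ (mem (a + 2, q, false)) using 1
      simp only [word, Bool.toNat_false, Bool.toNat_true, pow_zero, pow_one, mul_one]
      rw [mul_assoc, v_mul_v hC, mul_smul_comm, ← (commute_u_sq _).eq, ← mul_assoc, ← pow_add,
        add_comm 2 a]

theorem map_word {τ : A C →ₐ[ℂ] A C} (hτu : τ (u C) = -u C) (hτv : τ (v C) = -v C)
    (j : ℕ × ℕ × Bool) : τ (word C j) = (-1 : ℂ) ^ (j.1 + j.2.2.toNat) • word C j := by
  obtain ⟨a, q, b⟩ := j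
  simp only [word, map_mul, map_pow, hτu, hτv, neg_mul_neg, ← neg_one_smul ℂ (u C),
    ← neg_one_smul ℂ (v C), smul_pow, smul_mul_assoc, mul_smul_comm, smul_smul, pow_add]
  congr 1
  ring

theorem map_eq_self_of_mem_adjoin {τ : A C →ₐ[ℂ] A C} (hτu : τ (u C) = -u C)
    (hτv : τ (v C) = -v C) {m : ℕ} {F : A C}
    (hF : F ∈ Algebra.adjoin ℂ {u C ^ 2, (u C * v C) ^ m + (v C * u C) ^ m}) : τ F = F := by
  refine AlgHom.adjoin_le_equalizer τ (AlgHom.id ℂ _) ?_ hF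
  rintro _ (rfl | rfl) <;> simp [hτu, hτv, neg_sq (R := A C), neg_mul_neg (α := A C)]

def evenWord (C : ℂ) : ℕ × ℕ × Bool → A C
  | (p, q, false) => u C ^ (2 * p) * (v C * u C) ^ q
  | (p, q, true) => u C ^ (2 * p) * (u C * v C) ^ q

theorem mem_span_evenWord (hC : C ≠ 0) {τ : A C →ₐ[ℂ] A C} (hτu : τ (u C) = -u C)
    (hτv : τ (v C) = -v C) {F : A C} (hF : τ F = F) :
    F ∈ Submodule.span ℂ (Set.range (evenWord C)) := by
  have hc : ∀ j : ℕ × ℕ × Bool, ((-1 : ℂ) ^ (j.1 + j.2.2.toNat)) ^ 2 = 1 := fun j => by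
    rw [← pow_mul, mul_comm, pow_mul]; simp
  refine Submodule.span_mono ?_ (mem_span_image_of_apply_eq_self (R := τ.toLinearMap)
    two_ne_zero hc (map_word hτu hτv) (span_word hC ▸ Submodule.mem_top) hF)
  rintro _ ⟨⟨a, q, b⟩, hab : (-1 : ℂ) ^ (a + b.toNat) = 1, rfl⟩
  rw [neg_one_pow_eq_one_iff_even (by norm_num)] at hab
  rcases b with _ | _
  · obtain ⟨p, rfl⟩ := even_iff_two_dvd.mp (by simpa using hab)
    exact ⟨(p, q, false), by simp [word, evenWord]⟩
  · obtain ⟨p, rfl⟩ : Odd a := by simpa [Nat.even_add_one] using hab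
    refine ⟨(p, q + 1, true), ?_⟩
    change u C ^ (2 * p) * (u C * v C) ^ (q + 1) = u C ^ (2 * p + 1) * (v C * u C) ^ q * v C ^ 1
    rw [pow_one, u_pow_succ_mul_vu_pow_mul_v]

def swapSide : ℕ × ℕ × Bool → ℕ × ℕ × Bool
  | (p, q, b) => (p, q, !b)

theorem swapSide_involutive : Function.Involutive swapSide := by
  rintro ⟨p, q, b⟩
  simp [swapSide]

def twist (ζ : ℂ) : ℕ × ℕ × Bool → ℂ
  | (_, q, false) => (ζ ^ q)⁻¹
  | (_, q, true) => ζ ^ q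

theorem twist_swapSide (ζ : ℂ) (j : ℕ × ℕ × Bool) :
    twist ζ (swapSide j) = (twist ζ j)⁻¹ := by
  obtain ⟨p, q, _ | _⟩ := j <;> simp [twist, swapSide]

theorem twist_inv (ζ : ℂ) (j : ℕ × ℕ × Bool) : twist ζ⁻¹ j = (twist ζ j)⁻¹ := by
  obtain ⟨p, q, _ | _⟩ := j <;> simp [twist]

theorem twist_pow_eq_one {ζ : ℂ} {m : ℕ} (hζ : ζ ^ m = 1) (j : ℕ × ℕ × Bool) :
    twist ζ j ^ m = 1 := by
  obtain ⟨p, q, _ | _⟩ := j <;> simp [twist, ← pow_mul, pow_mul', hζ]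

theorem twist_eq_one_iff {ζ : ℂ} {m : ℕ} (hζ : IsPrimitiveRoot ζ m) (j : ℕ × ℕ × Bool) :
    twist ζ j = 1 ↔ m ∣ j.2.1 := by
  obtain ⟨p, q, _ | _⟩ := j <;> simp [twist, hζ.pow_eq_one_iff_dvd]

theorem map_evenWord {S : A C →ₗ[ℂ] A C} {ζ : ℂ}
    (h1 : ∀ p q : ℕ, 1 ≤ q → S (u C ^ (2 * p) * (v C * u C) ^ q) =
      (ζ ^ q)⁻¹ • (u C ^ (2 * p + 1) * (v C * u C) ^ (q - 1) * v C))
    (h2 : ∀ p q : ℕ, 1 ≤ q → S (u C ^ (2 * p + 1) * (v C * u C) ^ (q - 1) * v C) =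
      ζ ^ q • (u C ^ (2 * p) * (v C * u C) ^ q))
    (h3 : ∀ p : ℕ, S (u C ^ (2 * p)) = u C ^ (2 * p)) (j : ℕ × ℕ × Bool) :
    S (evenWord C j) = twist ζ j • evenWord C (swapSide j) := by
  obtain ⟨p, _ | q, _ | _⟩ := j
  · simpa [evenWord, twist, swapSide] using h3 p
  · simpa [evenWord, twist, swapSide] using h3 p
  · simpa [evenWord, twist, swapSide, u_pow_succ_mul_vu_pow_mul_v] using h1 p (q + 1) le_add_self
  · simpa [evenWord, twist, swapSide, u_pow_succ_mul_vu_pow_mul_v] using h2 p (q + 1) le_add_self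

theorem uv_pow_mul_vu_pow (hC : C ≠ 0) (m : ℕ) :
    (u C * v C) ^ m * (v C * u C) ^ m = (C ^ m)⁻¹ • (u C ^ 2) ^ (2 * m) := by
  rw [← (commute_uv_vu hC).mul_pow, uv_mul_vu hC, smul_pow, pow_mul, inv_pow]

theorem uv_pow_add_vu_pow_mem_adjoin (hC : C ≠ 0) (m k : ℕ) :
    ((u C * v C) ^ m) ^ k + ((v C * u C) ^ m) ^ k ∈
      Algebra.adjoin ℂ {u C ^ 2, (u C * v C) ^ m + (v C * u C) ^ m} := by
  refine ((commute_uv_vu hC).pow_pow m m).pow_add_pow_mem (Algebra.subset_adjoin (by simp)) ?_ k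
  rw [uv_pow_mul_vu_pow hC]
  exact Subalgebra.smul_mem _ (pow_mem (Algebra.subset_adjoin (by simp)) _) _

def symmWord (C : ℂ) (m : ℕ) : ℕ × ℕ → A C
  | (p, k) => u C ^ (2 * p) * (((u C * v C) ^ m) ^ k + ((v C * u C) ^ m) ^ k)

theorem symmWord_mem_adjoin (hC : C ≠ 0) {m : ℕ} (j : ℕ × ℕ) :
    symmWord C m j ∈ Algebra.adjoin ℂ {u C ^ 2, (u C * v C) ^ m + (v C * u C) ^ m} := by
  rw [symmWord, pow_mul]
  exact mul_mem (pow_mem (Algebra.subset_adjoin (by simp)) _)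
    (uv_pow_add_vu_pow_mem_adjoin hC m _)

theorem adjoin_le_span_symmWord (hC : C ≠ 0) (m : ℕ) :
    Subalgebra.toSubmodule (Algebra.adjoin ℂ {u C ^ 2, (u C * v C) ^ m + (v C * u C) ^ m}) ≤
      Submodule.span ℂ (Set.range (symmWord C m)) := by
  have mem : ∀ j, symmWord C m j ∈ Submodule.span ℂ (Set.range (symmWord C m)) :=
    fun j => Submodule.subset_span ⟨j, rfl⟩
  refine Algebra.adjoin_le_span_of_mul_mem ?_ ?_
  · convert Submodule.smul_mem _ (2⁻¹ : ℂ) (mem (0, 0)) using 1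
    simp only [symmWord, mul_zero, pow_zero, one_mul, ← two_smul ℂ (1 : A C), smul_smul]
    norm_num
  rintro _ ⟨⟨p, k⟩, rfl⟩ x (rfl | rfl)
  · convert mem (p + 1, k) using 1
    simp only [symmWord, mul_assoc, ← (commute_u_sq _).eq, mul_add, pow_add]
  · have hXY := (commute_uv_vu hC).pow_pow m m
    rcases k with _ | k
    · convert Submodule.smul_mem _ (2 : ℂ) (mem (p, 1)) using 1
      simp [symmWord, ← two_smul ℂ]
    · convert add_mem (mem (p, k + 2)) (Submodule.smul_mem _ (C ^ m)⁻¹ (mem (p + 2 * m, k)))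
        using 1
      simp only [symmWord]
      rw [mul_assoc, hXY.pow_add_pow_mul_add, uv_pow_mul_vu_pow hC, smul_mul_assoc, mul_add,
        mul_smul_comm, ← mul_assoc (u C ^ (2 * p)), ← pow_mul (u C) 2 (2 * m), ← pow_add,
        ← mul_add]

theorem evenWord_add_evenWord_swapSide (m p k : ℕ) (b : Bool) :
    evenWord C (p, m * k, b) + evenWord C (swapSide (p, m * k, b)) = symmWord C m (p, k) := by
  cases b <;> simp [evenWord, swapSide, symmWord, mul_add, pow_mul, add_comm]

theorem span_image_evenWord_eq_adjoin (hC : C ≠ 0) {ζ : ℂ} {m : ℕ} (hζ : IsPrimitiveRoot ζ m) :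
    Submodule.span ℂ
        ((fun j => evenWord C j + evenWord C (swapSide j)) '' {j | twist ζ j = 1}) =
      Subalgebra.toSubmodule (Algebra.adjoin ℂ {u C ^ 2, (u C * v C) ^ m + (v C * u C) ^ m}) := by
  refine le_antisymm (Submodule.span_le.mpr ?_) ((adjoin_le_span_symmWord hC m).trans ?_)
  · rintro _ ⟨⟨p, q, b⟩, hj, rfl⟩
    obtain ⟨k, rfl⟩ := (twist_eq_one_iff hζ _).mp hj
    change evenWord C (p, m * k, b) + evenWord C (swapSide (p, m * k, b)) ∈ Algebra.adjoin ℂ _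
    rw [evenWord_add_evenWord_swapSide]
    exact symmWord_mem_adjoin hC (p, k)
  · rw [Submodule.span_le]
    rintro _ ⟨⟨p, k⟩, rfl⟩
    refine Submodule.subset_span ⟨(p, m * k, false), ?_, evenWord_add_evenWord_swapSide m p k _⟩
    simp [twist_eq_one_iff hζ]

end Stmt17

open Stmt17 in
theorem stmt_17_general (m : ℕ) (hodd : Odd m) (lam : ℂ)
    (hlam : lam = Complex.exp (2 * Real.pi * Complex.I / m))
    (i : ℕ) (hcop : Nat.gcd i m = 1)
    (C : ℂ) (hC : C = lam ^ i)
    (τ : A C →ₐ[ℂ] A C) (hτu : τ (u C) = -u C) (hτv : τ (v C) = -v C)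
    (Sp Sm : A C →ₗ[ℂ] A C)
    (hSp1 : ∀ p q : ℕ, 1 ≤ q →
      Sp (u C ^ (2 * p) * (v C * u C) ^ q) =
        lam ^ (-((i * q : ℕ) : ℤ)) • (u C ^ (2 * p + 1) * (v C * u C) ^ (q - 1) * v C))
    (hSp2 : ∀ p q : ℕ, 1 ≤ q →
      Sp (u C ^ (2 * p + 1) * (v C * u C) ^ (q - 1) * v C) =
        lam ^ (i * q) • (u C ^ (2 * p) * (v C * u C) ^ q))
    (hSp3 : ∀ p : ℕ, Sp (u C ^ (2 * p)) = u C ^ (2 * p))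
    (hSm1 : ∀ p q : ℕ, 1 ≤ q →
      Sm (u C ^ (2 * p) * (v C * u C) ^ q) =
        lam ^ (i * q) • (u C ^ (2 * p + 1) * (v C * u C) ^ (q - 1) * v C))
    (hSm2 : ∀ p q : ℕ, 1 ≤ q →
      Sm (u C ^ (2 * p + 1) * (v C * u C) ^ (q - 1) * v C) =
        lam ^ (-((i * q : ℕ) : ℤ)) • (u C ^ (2 * p) * (v C * u C) ^ q))
    (hSm3 : ∀ p : ℕ, Sm (u C ^ (2 * p)) = u C ^ (2 * p)) :
    {F : A C | τ F = F ∧ Sp F = F ∧ Sm F = F} =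
      (Algebra.adjoin ℂ
        ({u C ^ 2, (u C * v C) ^ m + (v C * u C) ^ m} : Set (A C)) : Set (A C)) := by
  have hζ : IsPrimitiveRoot C m :=
    hC ▸ (hlam ▸ Complex.isPrimitiveRoot_exp m hodd.pos.ne').pow_of_coprime i hcop
  have hC0 : C ≠ 0 := hζ.ne_zero hodd.pos.ne'
  have hneg (q : ℕ) : lam ^ (-((i * q : ℕ) : ℤ)) = (C ^ q)⁻¹ := by
    rw [zpow_neg, zpow_natCast, pow_mul, hC]
  have hpos (q : ℕ) : lam ^ (i * q) = C ^ q := by rw [pow_mul, hC]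
  have hSp := map_evenWord (ζ := C) (fun p q hq => by rw [hSp1 p q hq, hneg])
    (fun p q hq => by rw [hSp2 p q hq, hpos]) hSp3
  have hSm := map_evenWord (ζ := C⁻¹) (fun p q hq => by rw [hSm1 p q hq, hpos, inv_pow, inv_inv])
    (fun p q hq => by rw [hSm2 p q hq, hneg, inv_pow]) hSm3
  have hspan := span_image_evenWord_eq_adjoin hC0 hζ
  ext F
  constructor
  · rintro ⟨hτF, hSpF, hSmF⟩
    have hF := mem_span_image_add_of_twisted_swap hodd swapSide_involutive
      (twist_pow_eq_one hζ.pow_eq_one) (twist_swapSide C) hSp (by simpa only [twist_inv] using hSm)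
      (mem_span_evenWord hC0 hτu hτv hτF) hSpF hSmF
    rwa [hspan] at hF
  · intro hF
    have hF' := (Subalgebra.mem_toSubmodule _).mpr hF
    rw [← hspan] at hF'
    exact ⟨map_eq_self_of_mem_adjoin hτu hτv hF,
      apply_eq_self_of_mem_span_image_add swapSide_involutive (twist_swapSide C) hSp hF',
      apply_eq_self_of_mem_span_image_add swapSide_involutive (twist_swapSide C⁻¹) hSm
        (by simpa only [twist_inv, inv_eq_one] using hF')⟩

open Stmt17 in
theorem stmt_17 (m : ℕ) (hm : 3 ≤ m) (hodd : Odd m) (lam : ℂ)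
    (hlam : lam = Complex.exp (2 * Real.pi * Complex.I / m))
    (i : ℕ) (hipos : 1 ≤ i) (hcop : Nat.gcd i m = 1)
    (C : ℂ) (hC : C = lam ^ i)
    (τ : A C →ₐ[ℂ] A C) (hτu : τ (u C) = -u C) (hτv : τ (v C) = -v C)
    (Sp Sm : A C →ₗ[ℂ] A C)
    (hSp1 : ∀ p q : ℕ, 1 ≤ q →
      Sp (u C ^ (2 * p) * (v C * u C) ^ q) =
        lam ^ (-((i * q : ℕ) : ℤ)) • (u C ^ (2 * p + 1) * (v C * u C) ^ (q - 1) * v C))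
    (hSp2 : ∀ p q : ℕ, 1 ≤ q →
      Sp (u C ^ (2 * p + 1) * (v C * u C) ^ (q - 1) * v C) =
        lam ^ (i * q) • (u C ^ (2 * p) * (v C * u C) ^ q))
    (hSp3 : ∀ p : ℕ, Sp (u C ^ (2 * p)) = u C ^ (2 * p))
    (hSm1 : ∀ p q : ℕ, 1 ≤ q →
      Sm (u C ^ (2 * p) * (v C * u C) ^ q) =
        lam ^ (i * q) • (u C ^ (2 * p + 1) * (v C * u C) ^ (q - 1) * v C))
    (hSm2 : ∀ p q : ℕ, 1 ≤ q →
      Sm (u C ^ (2 * p + 1) * (v C * u C) ^ (q - 1) * v C) =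
        lam ^ (-((i * q : ℕ) : ℤ)) • (u C ^ (2 * p) * (v C * u C) ^ q))
    (hSm3 : ∀ p : ℕ, Sm (u C ^ (2 * p)) = u C ^ (2 * p)) :
    {F : A C | τ F = F ∧ Sp F = F ∧ Sm F = F} =
      (Algebra.adjoin ℂ
        ({u C ^ 2, (u C * v C) ^ m + (v C * u C) ^ m} : Set (A C)) : Set (A C)) :=
  stmt_17_general m hodd lam hlam i hcop C hC τ hτu hτv Sp Sm hSp1 hSp2 hSp3 hSm1 hSm2 hSm3
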